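/- arXiv:0910.3002 — 2 statements merged into one kernel-verified Lean document; each statement's English description precedes it below -/
import Mathlib

section
/- In any finite rack R, the diagonal map d : R → R defined by d(x) = x ▷ x is a bijection. -/
structure PRack (R : Type*) where
  act : R → R → R
  inv : R → R → R
  inv_act : ∀ x y, inv (act x y) y = x
  act_inv : ∀ x y, act (inv x y) y = x
  dist : ∀ x y z, act (act x y) z = act (act x z) (act y z)

/-! The map `x ↦ x ▷ x` has inverse `y ↦ y ▷⁻¹ y`. Both identities come from applying right
distributivity to `z = y ▷⁻¹ y`, which satisfies `z ▷ y = y`, and then cancelling a right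
translation. -/

namespace PRack

variable {R : Type*} (r : PRack R)

theorem act_left_injective (y : R) : Function.Injective (r.act · y) :=
  Function.LeftInverse.injective (g := (r.inv · y)) (r.inv_act · y)

theorem act_act_self (x : R) : r.act x (r.act x x) = r.act x x := by
  simpa only [r.act_inv] using (r.dist (r.inv x x) x x).symm

theorem act_self_act_inv_self (y : R) : r.act (r.act (r.inv y y) (r.inv y y)) y = r.act y y := by
  rw [r.dist, r.act_inv]

theorem leftInverse_inv_self_act_self :
    Function.LeftInverse (fun y => r.inv y y) (fun x => r.act x x) := fun x => by
  simpa only [r.act_act_self] using r.inv_act x (r.act x x)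

theorem rightInverse_inv_self_act_self :
    Function.RightInverse (fun y => r.inv y y) (fun x => r.act x x) := fun y =>
  r.act_left_injective y (r.act_self_act_inv_self y)

end PRack

theorem stmt4_general {R : Type*} (r : PRack R) :
    Function.Bijective (fun x => r.act x x) :=
  ⟨r.leftInverse_inv_self_act_self.injective, r.rightInverse_inv_self_act_self.surjective⟩

theorem stmt4 {R : Type*} [Finite R] (r : PRack R) :
    Function.Bijective (fun x => r.act x x) :=
  stmt4_general r
end

section
/- Let R be a rack and let X and Y be n-element constant action R-shadows determined by permutations σ and τ in Sₙ respectively. Then X and Y are isomorphic as R-shadows if and only if σ and τ are conjugate in Sₙ. -/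
theorem Equiv.Perm.isConj_iff_exists_semiconj {α : Type*} {σ τ : Equiv.Perm α} :
    IsConj σ τ ↔ ∃ φ : Equiv.Perm α, Function.Semiconj φ σ τ := by
  rw [isConj_iff]
  refine exists_congr fun φ => ?_
  rw [mul_inv_eq_iff_eq_mul, Equiv.Perm.ext_iff]
  rfl

theorem stmt15_general {R : Type*} [Nonempty R] {n : ℕ}
    (σ τ : Equiv.Perm (Fin n))
    (smX smY : Fin n → R → Fin n)
    (hX : ∀ x s, smX x s = σ x) (hY : ∀ y s, smY y s = τ y) :
    (∃ φ : Fin n ≃ Fin n, ∀ (x : Fin n) (s : R), φ (smX x s) = smY (φ x) s) ↔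
      IsConj σ τ := by
  simp only [hX, hY, forall_const]
  exact Equiv.Perm.isConj_iff_exists_semiconj.symm

/-- Two n-element constant action R-shadows, given by permutations σ and τ,
are isomorphic as R-shadows iff σ and τ are conjugate in Sₙ. (R nonempty.) -/
theorem stmt15 {R : Type*} [Nonempty R] (r : PRack R) {n : ℕ}
    (σ τ : Equiv.Perm (Fin n))
    (smX smY : Fin n → R → Fin n)
    (hX : ∀ x s, smX x s = σ x) (hY : ∀ y s, smY y s = τ y) :
    (∃ φ : Fin n ≃ Fin n, ∀ (x : Fin n) (s : R), φ (smX x s) = smY (φ x) s) ↔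
      IsConj σ τ :=
  stmt15_general σ τ smX smY hX hY
end
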